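/- arXiv:2310.11985 — 4 statements merged into one kernel-verified Lean document; each statement's English description precedes it below -/
import Mathlib

section
/- Define J(z_1,...,z_N) = ∏_{i=1}^N ξ_i + λ Σ_{i=1}^N z_i ∏_{j=1}^{i-1} ξ_j, where ξ_i = z_i² + (1-z_i)², and define ρ_N = 1 and ρ_k = ∏_{i=k+1}^N ξ_i + λ Σ_{i=k+1}^N z_i ∏_{j=k+1}^{i-1} ξ_j for k < N. Then the partial derivative of J with respect to z_l equals (∏_{i=1}^{l-1} ξ_i) · ((4z_l - 2) ρ_l + λ). -/
open Finset

/-- The partial derivative of the total cost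
`J(z) = ∏_{i=1}^N ξ_i + λ ∑_{i=1}^N z_i ∏_{j=1}^{i-1} ξ_j` with respect to `z_l` equals
`(∏_{i=1}^{l-1} ξ_i) ((4 z_l - 2) ρ_l + λ)`. -/
theorem cost_partial_derivative
    (N : ℕ) (lam : ℝ) (z : ℕ → ℝ) (l : ℕ) (hl : l ∈ Finset.Icc 1 N)
    (J : (ℕ → ℝ) → ℝ)
    (hJ : ∀ w : ℕ → ℝ, J w =
      (∏ i ∈ Finset.Icc 1 N, ((w i) ^ 2 + (1 - w i) ^ 2))
        + lam * ∑ i ∈ Finset.Icc 1 N, w i * ∏ j ∈ Finset.Ico 1 i, ((w j) ^ 2 + (1 - w j) ^ 2))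
    (ρ : ℝ)
    (hρ : ρ = (∏ i ∈ Finset.Ioc l N, ((z i) ^ 2 + (1 - z i) ^ 2))
        + lam * ∑ i ∈ Finset.Ioc l N, z i * ∏ j ∈ Finset.Ioo l i, ((z j) ^ 2 + (1 - z j) ^ 2)) :
    HasDerivAt (fun t => J (Function.update z l t))
      ((∏ i ∈ Finset.Ico 1 l, ((z i) ^ 2 + (1 - z i) ^ 2)) * ((4 * z l - 2) * ρ + lam))
      (z l) := by
  obtain ⟨hl1, hlN⟩ := Finset.mem_Icc.mp hl
  set A : ℝ := ∏ i ∈ Finset.Ico 1 l, ((z i) ^ 2 + (1 - z i) ^ 2) with hA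
  set B : ℝ := ∏ i ∈ Finset.Ioc l N, ((z i) ^ 2 + (1 - z i) ^ 2) with hB
  set C : ℝ := ∑ i ∈ Finset.Ico 1 l, z i * ∏ j ∈ Finset.Ico 1 i, ((z j) ^ 2 + (1 - z j) ^ 2) with hC
  set S : ℝ := ∑ i ∈ Finset.Ioc l N, z i * ∏ j ∈ Finset.Ioo l i, ((z j) ^ 2 + (1 - z j) ^ 2) with hS
  have key : ∀ t : ℝ, J (Function.update z l t)
      = A * (t ^ 2 + (1 - t) ^ 2) * B
        + lam * (C + t * A + (t ^ 2 + (1 - t) ^ 2) * A * S) := by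
    intro t
    rw [hJ]
    set w := Function.update z l t with hw
    have hwl : w l = t := Function.update_self _ _ _
    have hwne : ∀ j, j ≠ l → w j = z j := fun j hj => Function.update_of_ne hj _ _
    have hsplit : Finset.Icc 1 N = Finset.Ico 1 l ∪ insert l (Finset.Ioc l N) := by
      ext j
      simp only [Finset.mem_Icc, Finset.mem_union, Finset.mem_Ico, Finset.mem_insert,
        Finset.mem_Ioc]
      omega
    have hdisj : Disjoint (Finset.Ico 1 l) (insert l (Finset.Ioc l N)) := by
      simp only [Finset.disjoint_left, Finset.mem_Ico, Finset.mem_insert, Finset.mem_Ioc]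
      rintro a ⟨h1, h2⟩ (rfl | ⟨h3, h4⟩) <;> omega
    have hlni : l ∉ Finset.Ioc l N := by simp
    have hprodA : ∀ s : Finset ℕ, (∀ j ∈ s, j ≠ l) →
        (∏ j ∈ s, ((w j) ^ 2 + (1 - w j) ^ 2)) = ∏ j ∈ s, ((z j) ^ 2 + (1 - z j) ^ 2) := by
      intro s hs
      exact Finset.prod_congr rfl fun j hj => by rw [hwne j (hs j hj)]
    have hP : (∏ i ∈ Finset.Icc 1 N, ((w i) ^ 2 + (1 - w i) ^ 2))
        = A * ((t ^ 2 + (1 - t) ^ 2) * B) := by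
      rw [hsplit, Finset.prod_union hdisj, Finset.prod_insert hlni, hwl]
      rw [hprodA _ (fun j hj => by simp at hj; omega),
        hprodA _ (fun j hj => by simp at hj; omega)]
    have hQ : (∑ i ∈ Finset.Icc 1 N, w i * ∏ j ∈ Finset.Ico 1 i, ((w j) ^ 2 + (1 - w j) ^ 2))
        = C + (t * A + (t ^ 2 + (1 - t) ^ 2) * A * S) := by
      rw [hsplit, Finset.sum_union hdisj, Finset.sum_insert hlni, hwl]
      congr 1
      · refine Finset.sum_congr rfl fun i hi => ?_
        simp only [Finset.mem_Ico] at hi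
        rw [hwne i (by omega), hprodA _ (fun j hj => by simp at hj; omega)]
      congr 1
      · rw [hprodA _ (fun j hj => by simp at hj; omega)]
      · rw [hS, Finset.mul_sum]
        refine Finset.sum_congr rfl fun i hi => ?_
        simp only [Finset.mem_Ioc] at hi
        have hsplit2 : Finset.Ico 1 i = Finset.Ico 1 l ∪ insert l (Finset.Ioo l i) := by
          ext j
          simp only [Finset.mem_union, Finset.mem_Ico, Finset.mem_insert, Finset.mem_Ioo]
          omega
        have hdisj2 : Disjoint (Finset.Ico 1 l) (insert l (Finset.Ioo l i)) := by
          simp only [Finset.disjoint_left, Finset.mem_Ico, Finset.mem_insert, Finset.mem_Ioo]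
          rintro a ⟨h1, h2⟩ (rfl | ⟨h3, h4⟩) <;> omega
        rw [hwne i (by omega), hsplit2, Finset.prod_union hdisj2,
          Finset.prod_insert (by simp), hwl,
          hprodA _ (fun j hj => by simp at hj; omega),
          hprodA _ (fun j hj => by simp at hj; omega)]
        ring
    rw [hP, hQ]; ring
  have hfun : (fun t => J (Function.update z l t))
      = fun t => A * (t ^ 2 + (1 - t) ^ 2) * B
        + lam * (C + t * A + (t ^ 2 + (1 - t) ^ 2) * A * S) := funext key
  rw [hfun, hρ]
  have hx : HasDerivAt (fun t : ℝ => t ^ 2 + (1 - t) ^ 2) (4 * z l - 2) (z l) := by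
    have h1 : HasDerivAt (fun t : ℝ => t ^ 2) (2 * z l) (z l) := by
      simpa using hasDerivAt_pow 2 (z l)
    have h2 : HasDerivAt (fun t : ℝ => (1 - t) ^ 2) (2 * z l - 2) (z l) := by
      have hinner : HasDerivAt (fun t : ℝ => 1 - t) (-1) (z l) := by
        simpa using (hasDerivAt_id' (z l)).const_sub (1:ℝ)
      have := (hasDerivAt_pow 2 (1 - z l)).comp (z l) hinner
      exact this.congr_deriv (by push_cast; ring)
    exact (h1.add h2).congr_deriv (by ring)
  have hD : HasDerivAt
      (fun t => A * (t ^ 2 + (1 - t) ^ 2) * B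
        + lam * (C + t * A + (t ^ 2 + (1 - t) ^ 2) * A * S))
      (A * (4 * z l - 2) * B + lam * (A + (4 * z l - 2) * A * S)) (z l) := by
    have h3 : HasDerivAt (fun t : ℝ => A * (t ^ 2 + (1 - t) ^ 2) * B)
        (A * (4 * z l - 2) * B) (z l) := by
      simpa [mul_comm, mul_assoc, mul_left_comm] using (hx.const_mul A).mul_const B
    have h4 : HasDerivAt (fun t : ℝ => C + t * A + (t ^ 2 + (1 - t) ^ 2) * A * S)
        (A + (4 * z l - 2) * A * S) (z l) := by
      have h5 : HasDerivAt (fun t : ℝ => t * A) A (z l) := by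
        simpa using (hasDerivAt_id (z l)).mul_const A
      have h6 : HasDerivAt (fun t : ℝ => (t ^ 2 + (1 - t) ^ 2) * A * S)
          ((4 * z l - 2) * A * S) (z l) := (hx.mul_const A).mul_const S
      exact ((h5.const_add C).add h6)
    exact h3.add (h4.const_mul lam)
  convert hD using 1
  ring
end

section
/- With J and ρ_l as above and λ ∈ [0,2), the simultaneous equations ∂J/∂z_l = 0 for all l (for fractions in the interior (0,1)) are satisfied exactly by z_l* = 1/2 - λ/(4ρ_l), where ρ_l is computed from z_{l+1}*,...,z_N* and ρ_N = 1. -/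
open Finset

/-- If the fractions satisfy the backward recursion
`z_l = 1/2 - λ/(4 ρ_l)` (with `ρ_N = 1` arising from the empty tail), then all partial
derivatives of the cost `J` vanish at `z`, i.e. `z` is a critical point of `J`. -/
theorem optimal_fractions_critical_point
    (N : ℕ) (lam : ℝ) (hlam0 : 0 ≤ lam) (hlam2 : lam < 2)
    (z ρ : ℕ → ℝ)
    (hρ : ∀ k, 1 ≤ k → k ≤ N → ρ k =
      (∏ i ∈ Finset.Ioc k N, ((z i) ^ 2 + (1 - z i) ^ 2))
        + lam * ∑ i ∈ Finset.Ioc k N, z i * ∏ j ∈ Finset.Ioo k i, ((z j) ^ 2 + (1 - z j) ^ 2))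
    (hz : ∀ k, 1 ≤ k → k ≤ N → z k = 1/2 - lam / (4 * ρ k))
    (hopen : ∀ k, 1 ≤ k → k ≤ N → z k ∈ Set.Ioo (0:ℝ) 1)
    (J : (ℕ → ℝ) → ℝ)
    (hJ : ∀ w : ℕ → ℝ, J w =
      (∏ i ∈ Finset.Icc 1 N, ((w i) ^ 2 + (1 - w i) ^ 2))
        + lam * ∑ i ∈ Finset.Icc 1 N, w i * ∏ j ∈ Finset.Ico 1 i, ((w j) ^ 2 + (1 - w j) ^ 2)) :
    ∀ l, 1 ≤ l → l ≤ N →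
      HasDerivAt (fun t => J (Function.update z l t)) 0 (z l) := by
  intro l hl1 hl2
  set ξ : ℝ → ℝ := fun w => w ^ 2 + (1 - w) ^ 2 with hξdef
  have hξpos : ∀ w : ℝ, 0 < ξ w := by
    intro w; simp only [hξdef]; nlinarith [sq_nonneg (2 * w - 1)]
  set P : ℝ := ∏ j ∈ Finset.Ico 1 l, ξ (z j) with hPdef
  set T : ℝ := ∏ i ∈ Finset.Ioc l N, ξ (z i) with hTdef
  set S : ℝ := ∑ i ∈ Finset.Ioc l N, z i * ∏ j ∈ Finset.Ioo l i, ξ (z j) with hSdef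
  set B : ℝ := ∑ i ∈ Finset.Ico 1 l, z i * ∏ j ∈ Finset.Ico 1 i, ξ (z j) with hBdef
  have hρl : ρ l = T + lam * S := hρ l hl1 hl2
  have hρpos : 0 < ρ l := by
    rw [hρl]
    have hT0 : 0 < T := Finset.prod_pos fun i _ => hξpos _
    have hS0 : 0 ≤ S := Finset.sum_nonneg fun i hi => by
      have hi' := Finset.mem_Ioc.mp hi
      have hzi := hopen i (le_trans hl1 hi'.1.le) hi'.2
      exact mul_nonneg hzi.1.le (Finset.prod_nonneg fun j _ => (hξpos _).le)
    nlinarith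
  have hlN : l < N + 1 := Nat.lt_succ_of_le hl2
  -- key rewriting of the cost along the l-th coordinate
  have key : ∀ t : ℝ, J (Function.update z l t) =
      ξ t * (P * T) + lam * B + (lam * P) * t + (lam * (P * S)) * ξ t := by
    intro t
    rw [hJ]
    have hupd : ∀ j : ℕ, j ≠ l → Function.update z l t j = z j :=
      fun j hj => Function.update_of_ne hj t z
    have e1 : Finset.Icc 1 N = Finset.Ico 1 (N + 1) := (Finset.Ico_add_one_right_eq_Icc 1 N).symm
    have prod_eq : ∏ i ∈ Finset.Icc 1 N, ξ (Function.update z l t i) = ξ t * (P * T) := by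
      rw [e1, ← Finset.prod_Ico_consecutive _ hl1 hlN.le,
        Finset.prod_eq_prod_Ico_succ_bot hlN, Function.update_self]
      have h1 : ∏ i ∈ Finset.Ico 1 l, ξ (Function.update z l t i) = P :=
        Finset.prod_congr rfl fun i hi => by
          rw [hupd i (Finset.mem_Ico.mp hi).2.ne]
      have h2 : ∏ i ∈ Finset.Ico (l + 1) (N + 1), ξ (Function.update z l t i) = T := by
        rw [show Finset.Ico (l+1) (N+1) = Finset.Ioc l N by
          rw [Finset.Ico_add_one_left_eq_Ioo, ← Finset.Icc_add_one_left_eq_Ioc, ← Finset.Ico_add_one_right_eq_Icc,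
            Finset.Ico_add_one_left_eq_Ioo]]
        exact Finset.prod_congr rfl fun i hi => by
          rw [hupd i (Finset.mem_Ioc.mp hi).1.ne']
      rw [h1, h2]; ring
    have sum_eq : ∑ i ∈ Finset.Icc 1 N,
        (Function.update z l t i) * ∏ j ∈ Finset.Ico 1 i, ξ (Function.update z l t j)
        = B + t * P + ξ t * (P * S) := by
      rw [e1, ← Finset.sum_Ico_consecutive _ hl1 hlN.le,
        Finset.sum_eq_sum_Ico_succ_bot hlN, Function.update_self]
      have h1 : ∑ i ∈ Finset.Ico 1 l,
          (Function.update z l t i) * ∏ j ∈ Finset.Ico 1 i, ξ (Function.update z l t j) = B :=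
        Finset.sum_congr rfl fun i hi => by
          have hil := (Finset.mem_Ico.mp hi).2
          rw [hupd i hil.ne]
          congr 1
          exact Finset.prod_congr rfl fun j hj =>
            by rw [hupd j (lt_trans (Finset.mem_Ico.mp hj).2 hil).ne]
      have hPl : ∏ j ∈ Finset.Ico 1 l, ξ (Function.update z l t j) = P :=
        Finset.prod_congr rfl fun j hj => by rw [hupd j (Finset.mem_Ico.mp hj).2.ne]
      have h2 : ∑ i ∈ Finset.Ico (l + 1) (N + 1),
          (Function.update z l t i) * ∏ j ∈ Finset.Ico 1 i, ξ (Function.update z l t j)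
          = ξ t * (P * S) := by
        rw [hSdef, Finset.mul_sum, Finset.mul_sum,
          show Finset.Ioc l N = Finset.Ico (l+1) (N+1) by
            rw [Finset.Ico_add_one_left_eq_Ioo, ← Finset.Icc_add_one_left_eq_Ioc, ← Finset.Ico_add_one_right_eq_Icc,
              Finset.Ico_add_one_left_eq_Ioo]]
        refine Finset.sum_congr rfl fun i hi => ?_
        have hi' := Finset.mem_Ico.mp hi
        have hli : l < i := hi'.1
        rw [hupd i hli.ne']
        rw [← Finset.prod_Ico_consecutive (fun j => ξ (Function.update z l t j)) hl1 hli.le,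
          Finset.prod_eq_prod_Ico_succ_bot hli, Function.update_self, hPl]
        have h3 : ∏ j ∈ Finset.Ico (l + 1) i, ξ (Function.update z l t j)
            = ∏ j ∈ Finset.Ioo l i, ξ (z j) := by
          rw [Finset.Ico_add_one_left_eq_Ioo]
          exact Finset.prod_congr rfl fun j hj => by
            rw [hupd j (Finset.mem_Ioo.mp hj).1.ne']
        rw [h3]; ring
      rw [h1, hPl, h2]; ring
    rw [prod_eq, sum_eq]; ring
  -- derivative of ξ
  have hd : HasDerivAt ξ (4 * z l - 2) (z l) := by
    have h2 := (hasDerivAt_id (z l)).pow 2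
    have h3 := ((hasDerivAt_id (z l)).const_sub 1).pow 2
    have := h2.add h3
    refine HasDerivAt.congr_deriv (f := ξ) this ?_
    simp; ring
  have hG : HasDerivAt
      (fun t => ξ t * (P * T) + lam * B + (lam * P) * t + (lam * (P * S)) * ξ t)
      ((4 * z l - 2) * (P * T) + (lam * P) * 1 + (lam * (P * S)) * (4 * z l - 2)) (z l) :=
    (((hd.mul_const _).add_const _).add ((hasDerivAt_id _).const_mul _)).add (hd.const_mul _)
  have h4 : (T + lam * S) * (4 * z l - 2) = -lam := by
    have hzl := hz l hl1 hl2
    rw [← hρl]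
    rw [hzl]
    field_simp
    ring
  have h0 : (4 * z l - 2) * (P * T) + (lam * P) * 1 + (lam * (P * S)) * (4 * z l - 2) = 0 := by
    linear_combination P * h4
  rw [funext key]
  exact h0 ▸ hG
end

section
/- Let λ ∈ [0,2) and define recursively z_N = 1/2 - λ/4, ξ_k = z_k² + (1-z_k)², ρ_N = 1, ρ_k = ∏_{i=k+1}^N ξ_i + λ Σ_{i=k+1}^N z_i ∏_{j=k+1}^{i-1} ξ_j, and z_k = 1/2 - λ/(4ρ_k). Then every z_k lies in [0, 1/2], i.e., the optimal search fractions are well-defined probabilities not exceeding 1/2. -/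
open Finset

/-- For `λ ∈ [0,2)`, the recursively defined optimal finite-horizon fractions
`z_k = 1/2 - λ/(4 ρ_k)` (with `ρ_N = 1` and `ρ_k` the tail cost) all lie in `[0, 1/2]`. -/
theorem optimal_fractions_in_unit_interval
    (N : ℕ) (lam : ℝ) (hlam0 : 0 ≤ lam) (hlam2 : lam < 2)
    (z ρ : ℕ → ℝ)
    (hρN : ρ N = 1)
    (hρ : ∀ k, 1 ≤ k → k < N → ρ k =
      (∏ i ∈ Finset.Ioc k N, ((z i) ^ 2 + (1 - z i) ^ 2))
        + lam * ∑ i ∈ Finset.Ioc k N, z i * ∏ j ∈ Finset.Ioo k i, ((z j) ^ 2 + (1 - z j) ^ 2))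
    (hz : ∀ k, 1 ≤ k → k ≤ N → z k = 1/2 - lam / (4 * ρ k)) :
    ∀ k, 1 ≤ k → k ≤ N → z k ∈ Set.Icc (0:ℝ) (1/2) := by
  have key : ∀ d : ℕ, ∀ k, 1 ≤ k → k ≤ N → N - k ≤ d → lam / 2 ≤ ρ k ∧ 0 < ρ k := by
    intro d
    induction d with
    | zero =>
      intro k hk1 hkN hd
      have hkN' : k = N := by omega
      subst hkN'
      rw [hρN]; constructor <;> linarith
    | succ d ih =>
      intro k hk1 hkN hd
      rcases eq_or_lt_of_le hkN with rfl | hlt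
      · rw [hρN]; constructor <;> linarith
      · have hk1N : k + 1 ≤ N := hlt
        obtain ⟨h1, h2⟩ := ih (k + 1) (by omega) hk1N (by omega)
        have hzk := hz (k + 1) (by omega) hk1N
        set r := ρ (k + 1) with hr
        set zz := z (k + 1) with hzz
        have hrec : ρ k = (zz ^ 2 + (1 - zz) ^ 2) * r + lam * zz := by
          rcases eq_or_lt_of_le hk1N with hEq | hlt2
          · rw [hρ k hk1 hlt]
            have hIoc : Finset.Ioc k N = {k + 1} := by ext x; simp; omega
            have hIoo : Finset.Ioo k (k + 1) = ∅ := by ext x; simp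
            rw [hIoc, Finset.prod_singleton, Finset.sum_singleton, hIoo,
              Finset.prod_empty]
            have hρ1 : r = 1 := by rw [hr, hEq, hρN]
            rw [← hzz, hρ1]; ring
          · rw [hρ k hk1 hlt, hr, hρ (k + 1) (by omega) hlt2]
            have hins : Finset.Ioc k N = insert (k + 1) (Finset.Ioc (k + 1) N) := by
              ext x; simp; omega
            have hnot : k + 1 ∉ Finset.Ioc (k + 1) N := by simp
            rw [hins, Finset.prod_insert hnot, Finset.sum_insert hnot]
            have hIoo1 : Finset.Ioo k (k + 1) = ∅ := by ext x; simp
            rw [hIoo1, Finset.prod_empty]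
            have hsum : ∑ i ∈ Finset.Ioc (k + 1) N,
                  z i * ∏ j ∈ Finset.Ioo k i, ((z j) ^ 2 + (1 - z j) ^ 2)
                = ((z (k + 1)) ^ 2 + (1 - z (k + 1)) ^ 2) *
                  ∑ i ∈ Finset.Ioc (k + 1) N,
                    z i * ∏ j ∈ Finset.Ioo (k + 1) i, ((z j) ^ 2 + (1 - z j) ^ 2) := by
              rw [Finset.mul_sum]
              apply Finset.sum_congr rfl
              intro i hi
              have hik : k + 1 < i := (Finset.mem_Ioc.mp hi).1
              have hIoo2 : Finset.Ioo k i = insert (k + 1) (Finset.Ioo (k + 1) i) := by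
                ext x; simp; omega
              rw [hIoo2, Finset.prod_insert (by simp)]
              ring
            rw [hsum, ← hzz]; ring
        have h4r : (0:ℝ) < 4 * r := by linarith
        have hdiv : lam / (4 * r) ≤ 1 / 2 := by
          rw [div_le_iff₀ h4r]; nlinarith
        have hdiv0 : 0 ≤ lam / (4 * r) := div_nonneg hlam0 (by linarith)
        have hz0 : 0 ≤ zz := by rw [hzk]; linarith
        have hz12 : zz ≤ 1 / 2 := by rw [hzk]; linarith
        have hlam_eq : lam = (1 / 2 - zz) * (4 * r) := by
          have : lam / (4 * r) = 1 / 2 - zz := by rw [hzk]; ring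
          field_simp at this; linarith
        rw [hrec]
        constructor
        · nlinarith [mul_nonneg (mul_nonneg h2.le hz0) (by linarith : (0:ℝ) ≤ 1 - zz)]
        · nlinarith [sq_nonneg (2 * zz - 1), mul_nonneg (mul_nonneg hlam0 hz0) h2.le,
            mul_nonneg hlam0 hz0]
  intro k hk1 hkN
  obtain ⟨h1, h2⟩ := key N k hk1 hkN (by omega)
  have h4r : (0:ℝ) < 4 * ρ k := by linarith
  rw [hz k hk1 hkN]
  constructor
  · have : lam / (4 * ρ k) ≤ 1 / 2 := by rw [div_le_iff₀ h4r]; nlinarith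
    linarith
  · have : 0 ≤ lam / (4 * ρ k) := div_nonneg hlam0 (by linarith)
    linarith
end

section
/- Let p ∈ (0, 1/2), z ∈ (0, 1/2), α = √p/(√p + √(1-p)), and define t(z) = (1-p)/(2(1-α)) + p/(2α) + ((1-p)/(2(1-α)) - p/(2α))·(1-2α)·(1-2z). Then 0 < t(z) < 1. -/
/-- The per-sample contraction factor `t(z)` of the probabilistic search
satisfies `0 < t(z) < 1` for `p ∈ (0,1/2)` and `z ∈ (0,1/2)`. -/
theorem contraction_factor_lt_one (p z : ℝ) (hp : p ∈ Set.Ioo (0:ℝ) (1/2))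
    (hz : z ∈ Set.Ioo (0:ℝ) (1/2))
    (α : ℝ) (hα : α = Real.sqrt p / (Real.sqrt p + Real.sqrt (1 - p)))
    (t : ℝ)
    (ht : t = (1 - p) / (2 * (1 - α)) + p / (2 * α)
      + ((1 - p) / (2 * (1 - α)) - p / (2 * α)) * (1 - 2 * α) * (1 - 2 * z)) :
    0 < t ∧ t < 1 := by
  obtain ⟨hp0, hp1⟩ := hp
  obtain ⟨hz0, hz1⟩ := hz
  set a := Real.sqrt p with ha_def
  set b := Real.sqrt (1 - p) with hb_def
  have ha : 0 < a := Real.sqrt_pos.2 hp0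
  have hb : 0 < b := Real.sqrt_pos.2 (by linarith)
  have ha2 : a ^ 2 = p := Real.sq_sqrt hp0.le
  have hb2 : b ^ 2 = 1 - p := Real.sq_sqrt (by linarith)
  have hab : 0 < a + b := by linarith
  have hαa : α = a / (a + b) := hα
  have hα0 : 0 < α := by rw [hαa]; positivity
  have hα1 : α < 1 := by
    rw [hαa, div_lt_one hab]; linarith
  have h1α : 1 - α = b / (a + b) := by
    rw [hαa]; field_simp; ring
  -- key identity
  have hteq : t = 1 - z * (1 - 2 * (a * b)) := by
    rw [ht, hαa]
    have hpa : p = a ^ 2 := ha2.symm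
    have hpb : 1 - p = b ^ 2 := hb2.symm
    rw [hpb, hpa]
    have hsum : a ^ 2 + b ^ 2 = 1 := by rw [ha2, hb2]; ring
    field_simp
    simp only [add_sub_cancel_left]
    field_simp
    linear_combination (2 - 2 * z) * hsum
  -- bound on a*b
  have habsq : (a * b) ^ 2 = p * (1 - p) := by
    rw [mul_pow, ha2, hb2]
  have hab2 : a * b < 1 / 2 := by
    nlinarith [mul_pos ha hb, sq_nonneg (p - 1/2)]
  have habpos : 0 < a * b := mul_pos ha hb
  constructor <;> rw [hteq] <;> nlinarith
end
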